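/- arXiv:1911.12102 — 2 statements merged into one kernel-verified Lean document; each statement's English description precedes it below -/
import Mathlib

section
/- Let X be a normed space, r > 0, and ε > 0. Suppose E and F are bounded convex subsets of X that both contain the closed ball of radius r centered at the origin. If the Hausdorff distance between E and F is strictly less than ε, then F is contained in ((r+ε)/r)·E (the dilation of E by the scalar (r+ε)/r). -/
open scoped Pointwise

/-!
Every point of `F` lies within `ε` of `E`, so `F ⊆ E + B_ε`. Since `B_ε = (ε/r) • B_r ⊆ (ε/r) • E`
and `E` is convex, `E + (ε/r) • E = (1 + ε/r) • E`.
-/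

open Metric

theorem Metric.subset_thickening_of_hausdorffDist_lt {α : Type*} [PseudoMetricSpace α]
    {s t : Set α} {ε : ℝ} (hs : s.Nonempty) (hsb : Bornology.IsBounded s)
    (htb : Bornology.IsBounded t) (h : hausdorffDist s t < ε) : t ⊆ thickening ε s := by
  rcases t.eq_empty_or_nonempty with rfl | ht
  · exact Set.empty_subset _
  intro y hy
  obtain ⟨x, hx, hxy⟩ := exists_dist_lt_of_hausdorffDist_lt' hy h
    (hausdorffEDist_ne_top_of_nonempty_of_bounded hs ht hsb htb)
  exact mem_thickening_iff.2 ⟨x, hx, dist_comm x y ▸ hxy⟩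

theorem Convex.thickening_subset_smul_of_closedBall_subset {X : Type*}
    [NormedAddCommGroup X] [NormedSpace ℝ X] {E : Set X} {r ε : ℝ} (hE : Convex ℝ E)
    (hr : 0 < r) (hε : 0 ≤ ε) (hBE : closedBall (0 : X) r ⊆ E) :
    Metric.thickening ε E ⊆ ((r + ε) / r) • E := by
  have hball : ball (0 : X) ε ⊆ (ε / r) • E :=
    calc ball (0 : X) ε ⊆ closedBall 0 ε := ball_subset_closedBall
      _ = (ε / r) • closedBall (0 : X) r := by
        rw [smul_closedBall _ _ hr.le, smul_zero, Real.norm_of_nonneg (by positivity),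
          div_mul_cancel₀ _ hr.ne']
      _ ⊆ (ε / r) • E := Set.smul_set_mono hBE
  calc Metric.thickening ε E = E + ball 0 ε := (add_ball_zero ε E).symm
    _ ⊆ E + (ε / r) • E := Set.add_subset_add_left hball
    _ = (1 + ε / r) • E := by
      rw [hE.add_smul zero_le_one (by positivity), one_smul]
    _ = ((r + ε) / r) • E := by rw [add_div, div_self hr.ne']

theorem hausdorff_close_implies_dilation_general
    {X : Type*} [NormedAddCommGroup X] [NormedSpace ℝ X]
    (r ε : ℝ) (hr : 0 < r) (hε : 0 < ε) (E F : Set X)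
    (hEconv : Convex ℝ E)
    (hEb : Bornology.IsBounded E) (hFb : Bornology.IsBounded F)
    (hBE : Metric.closedBall (0 : X) r ⊆ E)
    (hd : Metric.hausdorffDist E F < ε) :
    F ⊆ ((r + ε) / r) • E :=
  (subset_thickening_of_hausdorffDist_lt ⟨0, hBE (mem_closedBall_self hr.le)⟩ hEb hFb hd).trans
    (hEconv.thickening_subset_smul_of_closedBall_subset hr hε.le hBE)

theorem hausdorff_close_implies_dilation
    {X : Type*} [NormedAddCommGroup X] [NormedSpace ℝ X]
    (r ε : ℝ) (hr : 0 < r) (hε : 0 < ε) (E F : Set X)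
    (hEconv : Convex ℝ E) (hFconv : Convex ℝ F)
    (hEb : Bornology.IsBounded E) (hFb : Bornology.IsBounded F)
    (hBE : Metric.closedBall (0 : X) r ⊆ E) (hBF : Metric.closedBall (0 : X) r ⊆ F)
    (hd : Metric.hausdorffDist E F < ε) :
    F ⊆ ((r + ε) / r) • E :=
  hausdorff_close_implies_dilation_general r ε hr hε E F hEconv hEb hFb hBE hd
end

section
/- Let ℓ₁, …, ℓ_d (d ≥ 1) be isometries with pairwise orthogonal ranges, sᵢ = ℓᵢ + ℓᵢ*, and let P be any orthogonal projection. Then ‖(d+1)·I − P + Σᵢ (ℓᵢ² + ℓᵢ*²)‖ ≤ (1 + √d)². -/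
open ContinuousLinearMap

/-!
Write `A = ∑ᵢ ℓᵢ²`, so that the operator is `d • 1 + (1 - P) + (A + A*)`. Since the `ℓᵢ` are
isometries with orthogonal ranges, `A* A = ∑ᵢⱼ ℓᵢ* ℓᵢ* ℓⱼ ℓⱼ = d • 1`, so the C*-identity gives
`‖A‖ ≤ √d`. As `1 - P` is a projection, `‖1 - P‖ ≤ 1`, and the triangle inequality yields
`d + 1 + 2√d = (1 + √d)²`.
-/

theorem star_sum_mul_self_mul_sum_mul_self {R ι : Type*} [Semiring R] [StarRing R]
    [Fintype ι] [DecidableEq ι] (v : ι → R)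
    (hv : ∀ i j, star (v i) * v j = if i = j then 1 else 0) :
    star (∑ i, v i * v i) * ∑ i, v i * v i = Fintype.card ι • 1 := by
  have hterm : ∀ i j, star (v i * v i) * (v j * v j) = if i = j then 1 else 0 := by
    intro i j
    rw [star_mul, mul_assoc, ← mul_assoc (star (v i)) (v j), hv]
    split_ifs with h
    · rw [one_mul, ← h, hv, if_pos rfl]
    · rw [zero_mul, mul_zero]
  simp only [star_sum, Finset.sum_mul_sum, hterm, Finset.sum_ite_eq, Finset.mem_univ, if_true,
    Finset.sum_const, Finset.card_univ]

section CStarRing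

variable {E : Type*} [NormedRing E] [StarRing E] [CStarRing E]

theorem CStarRing.norm_one_le_one : ‖(1 : E)‖ ≤ 1 :=
  IsStarProjection.norm_le 1 (.one E)

theorem norm_sum_mul_self_le_sqrt_card {ι : Type*} [Fintype ι] [DecidableEq ι] (v : ι → E)
    (hv : ∀ i j, star (v i) * v j = if i = j then 1 else 0) :
    ‖∑ i, v i * v i‖ ≤ √(Fintype.card ι) := by
  refine Real.le_sqrt_of_sq_le ?_
  calc ‖∑ i, v i * v i‖ ^ 2 = ‖Fintype.card ι • (1 : E)‖ := by
        rw [sq, ← CStarRing.norm_star_mul_self, star_sum_mul_self_mul_sum_mul_self v hv]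
    _ ≤ Fintype.card ι * ‖(1 : E)‖ := norm_nsmul_le
    _ ≤ Fintype.card ι := mul_le_of_le_one_right (Nat.cast_nonneg _) CStarRing.norm_one_le_one

theorem norm_smul_one_sub_add_sum_le [NormedAlgebra ℂ E] {ι : Type*} [Fintype ι] [DecidableEq ι]
    (v : ι → E) (hv : ∀ i j, star (v i) * v j = if i = j then 1 else 0)
    {p : E} (hp : IsStarProjection p) :
    ‖((Fintype.card ι : ℂ) + 1) • (1 : E) - p + ∑ i, (v i * v i + star (v i) * star (v i))‖ ≤
      (1 + √(Fintype.card ι)) ^ 2 := by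
  set A := ∑ i, v i * v i
  have hA : ‖A‖ ≤ √(Fintype.card ι) := norm_sum_mul_self_le_sqrt_card v hv
  have hdecomp : ((Fintype.card ι : ℂ) + 1) • (1 : E) - p +
      ∑ i, (v i * v i + star (v i) * star (v i)) =
      (Fintype.card ι : ℂ) • (1 : E) + (1 - p) + (A + star A) := by
    simp only [A, star_sum, star_mul, Finset.sum_add_distrib, add_smul, one_smul]
    abel
  have hscalar : ‖(Fintype.card ι : ℂ) • (1 : E)‖ ≤ Fintype.card ι := by
    rw [norm_smul, Complex.norm_natCast]
    exact mul_le_of_le_one_right (Nat.cast_nonneg _) CStarRing.norm_one_le_one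
  have hsqrt := Real.sq_sqrt (Nat.cast_nonneg (α := ℝ) (Fintype.card ι))
  calc _ = ‖(Fintype.card ι : ℂ) • (1 : E) + (1 - p) + (A + star A)‖ := by rw [hdecomp]
    _ ≤ ‖(Fintype.card ι : ℂ) • (1 : E)‖ + ‖1 - p‖ + (‖A‖ + ‖star A‖) :=
        (norm_add_le _ _).trans (add_le_add (norm_add_le _ _) (norm_add_le _ _))
    _ ≤ Fintype.card ι + 1 + (√(Fintype.card ι) + √(Fintype.card ι)) := by
        rw [norm_star]
        gcongr
        exact IsStarProjection.norm_le _ hp.one_sub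
    _ = (1 + √(Fintype.card ι)) ^ 2 := by linear_combination -hsqrt

end CStarRing

theorem norm_bound_lehner_general
    {H : Type*} [NormedAddCommGroup H] [InnerProductSpace ℂ H] [CompleteSpace H]
    (d : ℕ)
    (ℓ : Fin d → H →L[ℂ] H)
    (hℓ : ∀ i j, (ContinuousLinearMap.adjoint (ℓ i)) ∘L (ℓ j) =
      if i = j then (1 : H →L[ℂ] H) else 0)
    (P : H →L[ℂ] H) (hPproj : P ∘L P = P) (hPsa : IsSelfAdjoint P) :
    ‖((d : ℂ) + 1) • (1 : H →L[ℂ] H) - P +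
        ∑ i, (ℓ i ∘L ℓ i +
          ContinuousLinearMap.adjoint (ℓ i) ∘L ContinuousLinearMap.adjoint (ℓ i))‖ ≤
      (1 + Real.sqrt d) ^ 2 := by
  have hP : IsStarProjection P := ⟨hPproj, hPsa⟩
  have hℓ' : ∀ i j, star (ℓ i) * ℓ j = if i = j then 1 else 0 := by
    simpa only [star_eq_adjoint, mul_def] using hℓ
  have hbound := norm_smul_one_sub_add_sum_le ℓ hℓ' hP
  simpa only [Fintype.card_fin, star_eq_adjoint, mul_def] using hbound

theorem norm_bound_lehner
    {H : Type*} [NormedAddCommGroup H] [InnerProductSpace ℂ H] [CompleteSpace H]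
    (d : ℕ) (hd : 1 ≤ d)
    (ℓ : Fin d → H →L[ℂ] H)
    (hℓ : ∀ i j, (ContinuousLinearMap.adjoint (ℓ i)) ∘L (ℓ j) =
      if i = j then (1 : H →L[ℂ] H) else 0)
    (P : H →L[ℂ] H) (hPproj : P ∘L P = P) (hPsa : IsSelfAdjoint P) :
    ‖((d : ℂ) + 1) • (1 : H →L[ℂ] H) - P +
        ∑ i, (ℓ i ∘L ℓ i +
          ContinuousLinearMap.adjoint (ℓ i) ∘L ContinuousLinearMap.adjoint (ℓ i))‖ ≤
      (1 + Real.sqrt d) ^ 2 :=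
  norm_bound_lehner_general d ℓ hℓ P hPproj hPsa
end
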